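/- Let w : (0,∞) → ℝ be integrable on (0,t) for every t > 0 with ‖w‖_W := sup_{t>0} |Pw(t) − w(t)| ≤ C. Then there exist measurable functions u, v : (0,∞) → ℝ with sup_{t>0} |u(t)| ≤ C + |Pw(1)| and sup_{t>0} |v(t)| ≤ C such that w(t) = u(t) + ∫_t^1 v(s) ds/s for every t > 0. (Explicitly one may take u = w − Pw + Pw(1) and v = w^#. This is the inclusion W ⊆ L^∞ + Q̄(L^∞).) -/

import Mathlib

open MeasureTheory Set Real Filter

/-- The averaging operator `Pw(t) = (1/t) ∫₀ᵗ w(s) ds`. -/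
noncomputable def Pav (w : ℝ → ℝ) (t : ℝ) : ℝ := (1 / t) * ∫ s in Ioo (0 : ℝ) t, w s

/-!
On `(0, ∞)` the average `Pw(t) = t⁻¹ ∫₀ᵗ w` is locally absolutely continuous, and by Lebesgue's
differentiation theorem `(Pw)'(t) = (w(t) - Pw(t)) / t = -w^#(t) / t` almost everywhere. The
fundamental theorem of calculus for absolutely continuous functions then gives
`∫ₜ¹ w^#(s) / s ds = Pw(t) - Pw(1)`, i.e. `w = (w - Pw + Pw(1)) + ∫ₜ¹ w^#(s) ds / s`.
-/

section

variable {w : ℝ → ℝ}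

theorem measurable_Pav (hw : Measurable w) : Measurable (Pav w) := by
  have hprim : StronglyMeasurable fun t => ∫ s, (Ioo 0 t).indicator w s := by
    refine StronglyMeasurable.integral_prod_right (f := fun t s => (Ioo 0 t).indicator w s) ?_
    refine (Measurable.ite ?_ (hw.comp measurable_snd) measurable_const).stronglyMeasurable
    exact (measurableSet_lt measurable_const measurable_snd).inter
      (measurableSet_lt measurable_snd measurable_fst)
  simp only [integral_indicator measurableSet_Ioo] at hprim
  exact measurable_id.const_div 1 |>.mul hprim.measurable

theorem Pav_eq_inv_mul_intervalIntegral {t : ℝ} (ht : 0 ≤ t) :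
    Pav w t = t⁻¹ * ∫ s in 0..t, w s := by
  rw [Pav, one_div, intervalIntegral.integral_of_le ht, integral_Ioc_eq_integral_Ioo]

theorem integral_Pav_sub_div_eq_Pav_sub (hInt : ∀ t > 0, IntegrableOn w (Ioo 0 t)) {a b : ℝ}
    (ha : 0 < a) (hb : 0 < b) :
    ∫ x in a..b, (Pav w x - w x) / x = Pav w a - Pav w b := by
  set c := max a b
  have hsub : uIcc a b ⊆ uIcc 0 c := by
    rw [uIcc_of_le (le_max_of_le_left ha.le)]
    exact uIcc_subset_Icc ⟨ha.le, le_max_left a b⟩ ⟨hb.le, le_max_right a b⟩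
  have hpos : ∀ x ∈ uIcc a b, 0 < x := fun x hx => lt_of_lt_of_le (lt_min ha hb) hx.1
  have hw : IntervalIntegrable w volume 0 c :=
    (intervalIntegrable_iff_integrableOn_Ioo_of_le (le_max_of_le_left ha.le)).2
      (hInt c (lt_max_of_lt_left ha))
  set G := fun x => ∫ s in 0..x, w s
  have hG : AbsolutelyContinuousOnInterval G a b :=
    (hw.absolutelyContinuousOnInterval_intervalIntegral left_mem_uIcc).mono hsub
  have hinv : AbsolutelyContinuousOnInterval (fun x : ℝ => x⁻¹) a b :=
    (contDiffOn_inv ℝ |>.mono fun x hx => (hpos x hx).ne').absolutelyContinuousOnInterval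
  have hderiv : ∀ᵐ x, x ∈ uIoc a b →
      deriv (fun x => x⁻¹ * G x) x = -((Pav w x - w x) / x) := by
    filter_upwards [hw.ae_hasDerivAt_integral] with x hx hxab
    have hx0 := hpos x (uIoc_subset_uIcc hxab)
    have hGx := hx (hsub (uIoc_subset_uIcc hxab)) 0 left_mem_uIcc
    rw [((hasDerivAt_inv hx0.ne').fun_mul hGx).deriv, Pav_eq_inv_mul_intervalIntegral hx0.le]
    field_simp
    ring
  calc ∫ x in a..b, (Pav w x - w x) / x
      = -∫ x in a..b, deriv (fun x => x⁻¹ * G x) x := by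
        rw [← intervalIntegral.integral_neg]
        exact intervalIntegral.integral_congr_ae (hderiv.mono fun x hx hxab => by simp [hx hxab])
    _ = Pav w a - Pav w b := by
        rw [(hinv.fun_mul hG).integral_deriv_eq_sub, Pav_eq_inv_mul_intervalIntegral ha.le,
          Pav_eq_inv_mul_intervalIntegral hb.le]
        ring

end

/-- The inclusion `W ⊆ L^∞ + Q̄(L^∞)`: if `‖w‖_W ≤ C` then `w = u + Q̄v` with
`|u| ≤ C + |Pw(1)|` and `|v| ≤ C` on `(0,∞)`. -/
theorem W_subset_Linfty_plus_Qbar (w : ℝ → ℝ) (C : ℝ) (hmeas : Measurable w)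
    (hInt : ∀ t > (0 : ℝ), IntegrableOn w (Ioo 0 t))
    (hW : ∀ t > (0 : ℝ), |Pav w t - w t| ≤ C) :
    ∃ u v : ℝ → ℝ, Measurable u ∧ Measurable v ∧
      (∀ t > (0 : ℝ), |u t| ≤ C + |Pav w 1|) ∧
      (∀ t > (0 : ℝ), |v t| ≤ C) ∧
      ∀ t > (0 : ℝ), w t = u t + ∫ s in t..(1 : ℝ), v s / s := by
  have hP := measurable_Pav hmeas
  refine ⟨fun t => w t - Pav w t + Pav w 1, fun t => Pav w t - w t,
    (hmeas.sub hP).add_const _, hP.sub hmeas, fun t ht => ?_, hW, fun t ht => ?_⟩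
  · calc |w t - Pav w t + Pav w 1| ≤ |Pav w t - w t| + |Pav w 1| := by
          rw [← abs_sub_comm]; exact abs_add_le _ _
      _ ≤ C + |Pav w 1| := by gcongr; exact hW t ht
  · rw [integral_Pav_sub_div_eq_Pav_sub hInt ht one_pos]
    ring
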